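/- For every ρ ∈ (-∞, 1) and every allocation x ∈ Ψ_ρ(u), there exist nonnegative constants q_1,…,q_m such that, with price curves g defined by g_j(y) = q_j·y^{1-ρ}, the pair (x, g) is a price curve equilibrium. -/

import Mathlib

open scoped Classical
open Real

namespace BandwidthAlloc

/-- A bid: `none` denotes the special bid β; `some r` denotes the real bid `r ≥ 0`. -/
abbrev Bid := Option NNReal

/-- Numeric value of a bid (β is treated as 0 in arithmetic). -/
noncomputable def bval (b : Bid) : ℝ := ((b.getD 0 : NNReal) : ℝ)

/-- A bid is positive when it is neither 0 nor β. -/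
def posBid (b : Bid) : Prop := 0 < bval b

/-- Utility of the bundle `xi` for an agent with desired set `Ri`: `min_{j ∈ Ri} xi j`. -/
noncomputable def bundleUtil {m : ℕ} (Ri : Finset (Fin m)) (xi : Fin m → ℝ) : ℝ :=
  sInf (xi '' (Ri : Set (Fin m)))

/-- Bandwidth-allocation utility of agent `i` under allocation `x`. -/
noncomputable def util {n m : ℕ} (R : Fin n → Finset (Fin m))
    (x : Fin n → Fin m → ℝ) (i : Fin n) : ℝ :=
  bundleUtil (R i) (x i)

/-- Weights: `w R i j = 1` iff `j ∈ R i`, else `0`. -/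
noncomputable def w {n m : ℕ} (R : Fin n → Finset (Fin m)) (i : Fin n) (j : Fin m) : ℝ :=
  if j ∈ R i then 1 else 0

/-- A valid (nonnegative, supply-respecting) allocation. -/
def validAlloc {n m : ℕ} (s : Fin m → ℝ) (x : Fin n → Fin m → ℝ) : Prop :=
  (∀ i j, 0 ≤ x i j) ∧ ∀ j, ∑ i, x i j ≤ s j

/-- CES welfare of the utility vector `v` (`ρ = 0` is Nash welfare; for `ρ < 0` a zero
utility yields welfare `0`, the limiting convention). -/
noncomputable def ces (ρ : ℝ) {n : ℕ} (v : Fin n → ℝ) : ℝ :=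
  if ρ = 0 then ∏ i, v i
  else if ρ < 0 ∧ ∃ i, v i = 0 then 0
  else (∑ i, v i ^ ρ) ^ (1 / ρ)

/-- `Ψ_ρ`: `x` is a valid allocation maximizing CES welfare among valid allocations. -/
def maxCES (ρ : ℝ) {n m : ℕ} (s : Fin m → ℝ) (R : Fin n → Finset (Fin m))
    (x : Fin n → Fin m → ℝ) : Prop :=
  validAlloc s x ∧ ∀ y, validAlloc s y → ces ρ (util R y) ≤ ces ρ (util R x)

/-- Constraint curve: continuous, normalized, strictly increasing, nonnegative on `[0,∞)`. -/
def IsConstraintCurve (f : ℝ → ℝ) : Prop :=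
  ContinuousOn f (Set.Ici 0) ∧ f 0 = 0 ∧ StrictMonoOn f (Set.Ici 0) ∧
    ∀ y ∈ Set.Ici (0 : ℝ), 0 ≤ f y

/-- `g` is identically zero on `[0,∞)`. -/
def zeroOn (g : ℝ → ℝ) : Prop := ∀ y ∈ Set.Ici (0 : ℝ), g y = 0

/-- Price curve: continuous, normalized, nonnegative, and either strictly increasing or
identically zero on `[0,∞)`. -/
def IsPriceCurve (g : ℝ → ℝ) : Prop :=
  ContinuousOn g (Set.Ici 0) ∧ g 0 = 0 ∧ (∀ y ∈ Set.Ici (0 : ℝ), 0 ≤ g y) ∧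
    (StrictMonoOn g (Set.Ici 0) ∨ zeroOn g)

/-- Cost of the bundle `xi` under price curves `g`. -/
noncomputable def cost {m : ℕ} (g : Fin m → ℝ → ℝ) (xi : Fin m → ℝ) : ℝ :=
  ∑ j, g j (xi j)

/-- `xi` is in the demand set of an agent with desired set `Ri` under price curves `g`. -/
def inDemand {m : ℕ} (g : Fin m → ℝ → ℝ) (Ri : Finset (Fin m)) (xi : Fin m → ℝ) : Prop :=
  (∀ j, 0 ≤ xi j) ∧ cost g xi ≤ 1 ∧
    ∀ yi : Fin m → ℝ, (∀ j, 0 ≤ yi j) → cost g yi ≤ 1 → bundleUtil Ri yi ≤ bundleUtil Ri xi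

/-- Price curve equilibrium. -/
def isPCE {n m : ℕ} (s : Fin m → ℝ) (R : Fin n → Finset (Fin m))
    (x : Fin n → Fin m → ℝ) (g : Fin m → ℝ → ℝ) : Prop :=
  (∀ i, inDemand g (R i) (x i)) ∧ (∀ j, ∑ i, x i j ≤ s j) ∧
    ∀ j, ¬ zeroOn (g j) → ∑ i, x i j = s j

/-- Step 1 of the ATP allocation rule: proportional sharing. -/
noncomputable def atp1 {n m : ℕ} (s : Fin m → ℝ) (b : Fin n → Fin m → Bid)
    (i : Fin n) (j : Fin m) : ℝ :=
  bval (b i j) / (∑ k, bval (b k j)) * s j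

/-- Steps 1–2 of the ATP allocation rule: goods with a positive bid are shared
proportionally; on a good where everyone bids `0` or `β`, an agent bidding `β` receives
as much as she receives of some fixed good on which she bids positively. -/
noncomputable def atp2 {n m : ℕ} (s : Fin m → ℝ) (b : Fin n → Fin m → Bid)
    (i : Fin n) (j : Fin m) : ℝ :=
  if ∃ k, posBid (b k j) then atp1 s b i j
  else if b i j = none then
    (if h : ∃ ℓ, posBid (b i ℓ) then atp1 s b i (Classical.choose h) else 0)
  else 0

/-- The full ATP allocation rule (steps 1–3): agents bidding `β` on an oversubscribed
step-2 good are penalized with the zero bundle. -/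
noncomputable def atp {n m : ℕ} (s : Fin m → ℝ) (b : Fin n → Fin m → Bid)
    (i : Fin n) (j : Fin m) : ℝ :=
  if ∃ ℓ, (¬ ∃ k, posBid (b k ℓ)) ∧ b i ℓ = none ∧ s ℓ < ∑ k, atp2 s b k ℓ then 0
  else atp2 s b i j

/-- Total bid-constraint cost `C_f(b_i)` of agent `i`'s bid vector. -/
noncomputable def bidCost {m : ℕ} (f : Fin m → ℝ → ℝ) (bi : Fin m → Bid) : ℝ :=
  ∑ j, f j (bval (bi j))

/-- A bid vector is feasible if it obeys the bid constraint `C_f(b_i) ≤ 1`. -/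
def feasibleBid {m : ℕ} (f : Fin m → ℝ → ℝ) (bi : Fin m → Bid) : Prop :=
  bidCost f bi ≤ 1

/-- `b` is a Nash equilibrium of `ATP(f)`: all bids are feasible and no agent can
strictly increase her utility by a unilateral feasible deviation. -/
def isNE {n m : ℕ} (s : Fin m → ℝ) (f : Fin m → ℝ → ℝ)
    (R : Fin n → Finset (Fin m)) (b : Fin n → Fin m → Bid) : Prop :=
  (∀ i, feasibleBid f (b i)) ∧
    ∀ (i : Fin n) (bi' : Fin m → Bid), feasibleBid f bi' →
      util R (atp s (Function.update b i bi')) i ≤ util R (atp s b) i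

/-- `NE_X(ATP(f))`: allocations arising from Nash equilibrium bid profiles. -/
def NEX {n m : ℕ} (s : Fin m → ℝ) (f : Fin m → ℝ → ℝ)
    (R : Fin n → Finset (Fin m)) : Set (Fin n → Fin m → ℝ) :=
  {x | ∃ b, isNE s f R b ∧ x = atp s b}

/-- `f` is homogeneous of degree `α` on the nonnegative reals. -/
def Homog (f : ℝ → ℝ) (α : ℝ) : Prop :=
  ∀ c ≥ (0 : ℝ), ∀ y ≥ (0 : ℝ), f (c * y) = c ^ α * f y

/-- `γ* = max {γ ≥ 0 : γ · Σ_i w_{ij} ≤ s_j for all j}` of Mechanism 1. -/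
noncomputable def gammaStar {n m : ℕ} (s : Fin m → ℝ) (R : Fin n → Finset (Fin m)) : ℝ :=
  sSup {γ : ℝ | 0 ≤ γ ∧ ∀ j, γ * ∑ i, w R i j ≤ s j}

/-- Mechanism 1: `x i j = γ* · w i j`. -/
noncomputable def mech1 {n m : ℕ} (s : Fin m → ℝ) (R : Fin n → Finset (Fin m)) :
    Fin n → Fin m → ℝ :=
  fun i j => gammaStar s R * w R i j

/-- `min_i u_i(x_i)`. -/
noncomputable def minUtil {n m : ℕ} (R : Fin n → Finset (Fin m))
    (x : Fin n → Fin m → ℝ) : ℝ :=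
  sInf (Set.range fun i => util R x i)

/-- `x` is maxmin-optimal: valid and attaining the maximum of `min_i u_i` over valid
allocations. -/
def maxminOptimal {n m : ℕ} (s : Fin m → ℝ) (R : Fin n → Finset (Fin m))
    (x : Fin n → Fin m → ℝ) : Prop :=
  validAlloc s x ∧ ∀ y, validAlloc s y → minUtil R y ≤ minUtil R x

/-- Mechanism 2: `P i k` is the set agent `i` claims agent `k` desires.
`eta P i = |{k : R_k(k) ≠ R_k(i)}|`. -/
noncomputable def eta {n m : ℕ} (P : Fin n → Fin n → Finset (Fin m)) (i : Fin n) : ℕ :=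
  (Finset.univ.filter fun k => P k k ≠ P i k).card

/-- Agent `i` is in `N̄`: for some `k`, `R_k(k) ⊊ R_k(i)`. -/
def inNbar {n m : ℕ} (P : Fin n → Fin n → Finset (Fin m)) (i : Fin n) : Prop :=
  ∃ k, P k k ⊂ P i k

/-- The penalty factor `α_i` of Mechanism 2. -/
noncomputable def alpha {n m : ℕ} (P : Fin n → Fin n → Finset (Fin m)) (i : Fin n) : ℝ :=
  if inNbar P i then 0 else 1 - (eta P i : ℝ) / n

/-- Effective reported sets of Mechanism 2: agents in `N̄` are replaced by `∅`. -/
noncomputable def effSets {n m : ℕ} (P : Fin n → Fin n → Finset (Fin m)) :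
    Fin n → Finset (Fin m) :=
  fun i => if inNbar P i then ∅ else P i i

/-- Mechanism 2: the allocation `x_i = α_i · y_i` where `y` is the Mechanism 1 outcome
on the effective sets. -/
noncomputable def mech2 {n m : ℕ} (s : Fin m → ℝ) (P : Fin n → Fin n → Finset (Fin m)) :
    Fin n → Fin m → ℝ :=
  fun i j => alpha P i * mech1 s (effSets P) i j

end BandwidthAlloc

/-!
The utility vector `u` of a CES-optimal allocation is positive, and it maximises the concave
function `∑ᵢ φ(vᵢ)` with `φ'(t) = t^(ρ-1)` under the linear constraints
`∑_{i : j ∈ Rᵢ} vᵢ ≤ sⱼ`: any utility vector `v` is realised by giving every agent `vᵢ` of each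
good she desires. Separating `s` from the open convex set of constraint values lying strictly
above those of better utility vectors (Hahn–Banach) produces KKT multipliers `q ≥ 0` with
`∑_{j ∈ Rᵢ} qⱼ = uᵢ^(ρ-1)`, positive only on goods that are used up. Under the prices
`qⱼ y^(1-ρ)` agent `i`'s bundle then costs `uᵢ^(ρ-1) uᵢ^(1-ρ) = 1`, while any bundle of utility
`v` costs at least `(∑_{j ∈ Rᵢ} qⱼ) v^(1-ρ)`, so no affordable bundle beats `uᵢ`.
-/

open Set Filter Topology Matrix
open scoped Pointwise

lemma le_of_forall_pos_le_add_mul {a b c : ℝ} (h : ∀ t : ℝ, 0 < t → a ≤ b + t * c) :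
    a ≤ b := by
  rcases le_or_gt c 0 with hc | hc
  · linarith [h 1 one_pos]
  · refine le_of_forall_pos_le_add fun ε hε => ?_
    simpa [div_mul_cancel₀ _ hc.ne'] using h (ε / c) (div_pos hε hc)

lemma nonneg_of_forall_pos_le_add_mul {a b c : ℝ} (h : ∀ t : ℝ, 0 < t → a ≤ b + t * c) :
    0 ≤ c := by
  by_contra! hc
  have := h ((|a - b| + 1) / -c) (div_pos (by positivity) (neg_pos.2 hc))
  rw [div_mul_eq_mul_div, div_neg, mul_div_cancel_right₀ _ hc.ne] at this
  linarith [neg_abs_le (a - b)]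

lemma HasDerivAt.eventually_lt_nhdsGT {f : ℝ → ℝ} {f' x : ℝ} (hf : HasDerivAt f f' x)
    (hf' : 0 < f') : ∀ᶠ t in 𝓝[>] 0, f x < f (x + t) := by
  filter_upwards [hf.tendsto_slope_zero_right.eventually (eventually_gt_nhds hf'),
    self_mem_nhdsWithin] with t hslope (ht : 0 < t)
  rw [smul_eq_mul] at hslope
  exact sub_pos.1 ((pos_iff_pos_of_mul_pos hslope).1 (inv_pos.2 ht))

lemma ConcaveOn.sum_apply {ι : Type*} [Fintype ι] {f : ℝ → ℝ} {S : Set ℝ}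
    (hf : ConcaveOn ℝ S f) : ConcaveOn ℝ (univ.pi fun _ : ι => S) fun v => ∑ i, f (v i) := by
  refine ⟨convex_pi fun _ _ => hf.1, fun v hv v' hv' a b ha hb hab => ?_⟩
  simp only [smul_eq_mul, Finset.mul_sum, ← Finset.sum_add_distrib, Pi.add_apply, Pi.smul_apply]
  exact Finset.sum_le_sum fun i _ => hf.2 (hv i trivial) (hv' i trivial) ha hb hab

/-- A zero coordinate has infinite marginal value: mixing in `t` of a positive vector gains
`t ^ ρ * δ ^ ρ` there and loses only `O(t)` elsewhere. -/
lemma exists_sum_rpow_lt_sum_rpow_mix {ι : Type*} [Fintype ι] {ρ : ℝ} (hρ0 : 0 < ρ) (hρ1 : ρ < 1)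
    {u : ι → ℝ} (hu : 0 ≤ u) {k : ι} (hk : u k = 0) {δ : ℝ} (hδ : 0 < δ) :
    ∃ t ∈ Ioo (0 : ℝ) 1, ∑ i, u i ^ ρ < ∑ i, ((1 - t) * u i + t * δ) ^ ρ := by
  set S := ∑ i, u i ^ ρ
  have hlim : Tendsto (fun t : ℝ => t ^ (1 - ρ) * S) (𝓝[>] 0) (𝓝 0) := by
    have hc : ContinuousAt (fun t : ℝ => t ^ (1 - ρ) * S) 0 :=
      (continuousAt_id.rpow_const (Or.inr (by linarith))).mul continuousAt_const
    simpa [zero_rpow (by linarith : 1 - ρ ≠ 0)] using hc.tendsto.mono_left nhdsWithin_le_nhds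
  obtain ⟨t, hts, ht⟩ := ((hlim.eventually (gt_mem_nhds (rpow_pos_of_pos hδ ρ))).and
    (Ioo_mem_nhdsGT one_pos)).exists
  refine ⟨t, ht, ?_⟩
  have hterm : ∀ i, (1 - t) * u i ^ ρ + (if k = i then t ^ ρ * δ ^ ρ else 0) ≤
      ((1 - t) * u i + t * δ) ^ ρ := fun i => by
    split_ifs with hi
    · subst hi
      simp [hk, zero_rpow hρ0.ne', mul_rpow ht.1.le hδ.le]
    · have := (concaveOn_rpow hρ0.le hρ1.le).2 (hu i : 0 ≤ u i) hδ.le (sub_nonneg.2 ht.2.le)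
        ht.1.le (by ring)
      simp only [smul_eq_mul] at this
      nlinarith [rpow_nonneg hδ.le ρ]
  have hsum := Finset.sum_le_sum (s := Finset.univ) fun i _ => hterm i
  rw [Finset.sum_add_distrib, Finset.sum_ite_eq, if_pos (Finset.mem_univ k), ← Finset.mul_sum]
    at hsum
  have : t * S < t ^ ρ * δ ^ ρ :=
    calc t * S = t ^ ρ * (t ^ (1 - ρ) * S) := by rw [← mul_assoc, ← rpow_add ht.1]; simp
      _ < t ^ ρ * δ ^ ρ := mul_lt_mul_of_pos_left hts (rpow_pos_of_pos ht.1 ρ)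
  linarith

theorem exists_pos_dotProduct_le_of_forall_not_le {E κ : Type*} [AddCommGroup E] [Module ℝ E]
    [Fintype κ] (A : E →ₗ[ℝ] κ → ℝ) (s : κ → ℝ) {U : Set E} (hU : Convex ℝ U)
    (hne : U.Nonempty) (h : ∀ v ∈ U, ¬ A v ≤ s) :
    ∃ y : κ → ℝ, 0 < y ∧ ∀ v ∈ U, y ⬝ᵥ s ≤ y ⬝ᵥ A v := by
  set P : Set (κ → ℝ) := univ.pi fun _ => Ioi 0
  have hT : s ∉ A '' U + P := by
    rintro ⟨_, ⟨v, hv, rfl⟩, p, hp, hvp⟩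
    exact h v hv fun j => hvp ▸ le_add_of_nonneg_right (hp j (mem_univ j)).le
  obtain ⟨f, hf⟩ := geometric_hahn_banach_open_point ((hU.linear_image A).add (convex_pi
    fun _ _ => convex_Ioi 0)) ((isOpen_set_pi finite_univ fun _ _ => isOpen_Ioi).add_left) hT
  set y : κ → ℝ := fun j => -f (Pi.single j 1)
  have hfy : ∀ z, f z = -(y ⬝ᵥ z) := fun z => by
    conv_lhs => rw [← Finset.univ_sum_single z]
    rw [map_sum, dotProduct, ← Finset.sum_neg_distrib]
    refine Finset.sum_congr rfl fun j _ => ?_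
    rw [← mul_one (z j), ← smul_eq_mul, Pi.single_smul', map_smul]
    simp [y, mul_comm]
  have hsep : ∀ v ∈ U, ∀ p ∈ P, y ⬝ᵥ s ≤ y ⬝ᵥ A v + y ⬝ᵥ p := fun v hv p hp => by
    have := hf _ (add_mem_add (mem_image_of_mem A hv) hp)
    rw [hfy, hfy, dotProduct_add] at this
    linarith
  obtain ⟨v₀, hv₀⟩ := hne
  have hone : (1 : κ → ℝ) ∈ P := fun _ _ => show (0:ℝ) < 1 from one_pos
  -- `A '' U + P` is upward closed, so `f` is antitone there, i.e. `y ≥ 0`.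
  have hy : 0 ≤ y := fun j => nonneg_of_forall_pos_le_add_mul
      (a := y ⬝ᵥ s) (b := y ⬝ᵥ A v₀ + y ⬝ᵥ 1) fun t ht => by
    have := hsep v₀ hv₀ (1 + t • Pi.single j 1) fun i _ => by
      rcases eq_or_ne i j with rfl | hij <;> simp [*, add_pos_of_pos_of_nonneg, ht.le]
    simpa [dotProduct_add, add_assoc] using this
  refine ⟨y, hy.lt_of_ne fun hy0 => ?_, fun v hv =>
    le_of_forall_pos_le_add_mul (c := y ⬝ᵥ 1) fun t ht => ?_⟩
  · have := hf _ (add_mem_add (mem_image_of_mem A hv₀) hone)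
    simp [hfy, ← hy0] at this
  · simpa [dotProduct_smul] using hsep v hv (t • 1) fun _ _ => by simpa using ht

theorem exists_nonneg_smul_eq_of_forall_dotProduct_pos {ι : Type*} [Fintype ι] {g Q : ι → ℝ}
    (hg : g ≠ 0) (h : ∀ d, 0 < g ⬝ᵥ d → 0 ≤ Q ⬝ᵥ d) : ∃ c : ℝ, 0 ≤ c ∧ Q = c • g := by
  have hgg : 0 < g ⬝ᵥ g := (dotProduct_self_star_nonneg g).lt_of_ne' (by simpa using hg)
  have horth : ∀ d, g ⬝ᵥ d = 0 → 0 ≤ Q ⬝ᵥ d := fun d hd =>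
    le_of_forall_pos_le_add_mul (c := Q ⬝ᵥ g) fun t ht => by
      simpa [dotProduct_add, dotProduct_smul, hd, hgg, ht] using h (d + t • g)
  set c := Q ⬝ᵥ g / g ⬝ᵥ g
  set r := Q - c • g
  have hgr : g ⬝ᵥ r = 0 := by
    simp [r, c, dotProduct_sub, dotProduct_smul, dotProduct_comm g Q, hgg.ne']
  have hQr : Q ⬝ᵥ r = 0 :=
    le_antisymm (by simpa using horth (-r) (by simp [hgr])) (horth r hgr)
  have hr : r = 0 := by
    rw [← dotProduct_self_eq_zero]
    simpa [hQr, hgr, dotProduct_smul, dotProduct_comm] using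
      congrArg (· ⬝ᵥ r) (show r = Q - c • g from rfl)
  exact ⟨c, div_nonneg (h g hgg) hgg.le, sub_eq_zero.1 hr⟩

lemma eventually_nhdsGT_mem_and_lt {ι : Type*} {D : Set (ι → ℝ)}
    {F : (ι → ℝ) → ℝ} (hD : IsOpen D) {u d : ι → ℝ} (hu : u ∈ D) {f' : ℝ}
    (hF : HasDerivAt (fun t : ℝ => F (u + t • d)) f' 0) (hf' : 0 < f') :
    ∀ᶠ t in 𝓝[>] (0 : ℝ), u + t • d ∈ D ∧ F u < F (u + t • d) := by
  have hcont : Tendsto (fun t : ℝ => u + t • d) (𝓝[>] 0) (𝓝 u) := by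
    refine ((?_ : Continuous fun t : ℝ => u + t • d).tendsto' 0 u (by simp)).mono_left
      nhdsWithin_le_nhds
    fun_prop
  filter_upwards [hcont (hD.mem_nhds hu), hF.eventually_lt_nhdsGT hf'] with t hD' hF'
  exact ⟨hD', by simpa using hF'⟩

lemma eq_of_dotProduct_eq_of_le {κ : Type*} [Fintype κ] {y a s : κ → ℝ} (hy : 0 ≤ y)
    (has : a ≤ s) (h : y ⬝ᵥ a = y ⬝ᵥ s) {j : κ} (hj : 0 < y j) : a j = s j := by
  have hsum : y ⬝ᵥ (s - a) = 0 := by rw [dotProduct_sub, h, sub_self]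
  have := (Finset.sum_eq_zero_iff_of_nonneg fun j _ =>
    mul_nonneg (hy j) (sub_nonneg.2 (has j))).1 hsum j (Finset.mem_univ j)
  linarith [(mul_eq_zero.1 this).resolve_left hj.ne']

theorem exists_kkt_multipliers {ι κ : Type*} [Fintype ι] [Fintype κ] {D : Set (ι → ℝ)}
    {F : (ι → ℝ) → ℝ} (hD : IsOpen D) (hF : ConcaveOn ℝ D F) {u g : ι → ℝ} (hu : u ∈ D)
    (hg : g ≠ 0) (hFu : ∀ d, HasDerivAt (fun t : ℝ => F (u + t • d)) (g ⬝ᵥ d) 0)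
    (M : Matrix κ ι ℝ) {s : κ → ℝ} (hs : ∀ j, 0 < s j) (hMu : M *ᵥ u ≤ s)
    (hmax : ∀ v ∈ D, M *ᵥ v ≤ s → F v ≤ F u) :
    ∃ q : κ → ℝ, 0 ≤ q ∧ q ᵥ* M = g ∧ ∀ j, 0 < q j → (M *ᵥ u) j = s j := by
  set U := {v ∈ D | F u < F v}
  have hgg : 0 < g ⬝ᵥ g := by simpa using dotProduct_star_self_pos_iff.2 hg
  have hray : ∀ d, 0 < g ⬝ᵥ d → ∀ᶠ t in 𝓝[>] (0 : ℝ), u + t • d ∈ U := fun d hd =>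
    eventually_nhdsGT_mem_and_lt hD hu (hFu d) hd
  obtain ⟨t, ht⟩ := (hray g hgg).exists
  obtain ⟨y, hy, hyU⟩ := exists_pos_dotProduct_le_of_forall_not_le M.mulVecLin s
    (hF.convex_gt (F u)) ⟨_, ht⟩ fun v hv hle => (hmax v hv.1 hle).not_gt hv.2
  set Q := y ᵥ* M
  have hline : ∀ d, 0 < g ⬝ᵥ d → ∀ᶠ t in 𝓝[>] (0 : ℝ), y ⬝ᵥ s ≤ Q ⬝ᵥ u + t * Q ⬝ᵥ d :=
    fun d hd => (hray d hd).mono fun t ht => by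
      simpa [Q, dotProduct_mulVec, dotProduct_add, dotProduct_smul] using hyU _ ht
  have hQu : Q ⬝ᵥ u = y ⬝ᵥ s := by
    refine le_antisymm ?_ (ge_of_tendsto ?_ (hline g hgg))
    · rw [← dotProduct_mulVec]
      exact dotProduct_le_dotProduct_of_nonneg_left hMu hy.le
    · refine ((?_ : Continuous fun t : ℝ => Q ⬝ᵥ u + t * Q ⬝ᵥ g).tendsto' 0 _ (by simp)).mono_left
        nhdsWithin_le_nhds
      fun_prop
  obtain ⟨c, hc0, hQc⟩ := exists_nonneg_smul_eq_of_forall_dotProduct_pos hg fun d hd => by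
    obtain ⟨t, ht, ht0 : 0 < t⟩ := ((hline d hd).and self_mem_nhdsWithin).exists
    exact (mul_nonneg_iff_of_pos_left ht0).1 (by linarith)
  have hys : 0 < y ⬝ᵥ s := by
    obtain ⟨hy0, j, hj⟩ := Pi.lt_def.1 hy
    exact Finset.sum_pos' (fun j _ => mul_nonneg (hy0 j) (hs j).le)
      ⟨j, Finset.mem_univ j, mul_pos hj (hs j)⟩
  have hc : 0 < c := hc0.lt_of_ne' fun hc => by simp [hQc, hc] at hQu; linarith
  refine ⟨c⁻¹ • y, smul_nonneg (inv_nonneg.2 hc0) hy.le, ?_, fun j hj =>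
    eq_of_dotProduct_eq_of_le hy.le hMu (by rw [dotProduct_mulVec]; exact hQu)
      ((smul_pos_iff_of_pos_left (inv_pos.2 hc)).1 hj)⟩
  rw [smul_vecMul, show y ᵥ* M = Q from rfl, hQc, smul_smul, inv_mul_cancel₀ hc.ne', one_smul]

namespace BandwidthAlloc

lemma bundleUtil_le {m : ℕ} {Ri : Finset (Fin m)} (xi : Fin m → ℝ) {j : Fin m} (hj : j ∈ Ri) :
    bundleUtil Ri xi ≤ xi j :=
  csInf_le ((Ri.finite_toSet.image xi).bddBelow) ⟨j, hj, rfl⟩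

lemma le_bundleUtil {m : ℕ} {Ri : Finset (Fin m)} (hRi : Ri.Nonempty) {xi : Fin m → ℝ} {c : ℝ}
    (hc : ∀ j ∈ Ri, c ≤ xi j) : c ≤ bundleUtil Ri xi :=
  le_csInf ((Finset.coe_nonempty.2 hRi).image xi) (by rintro _ ⟨j, hj, rfl⟩; exact hc j hj)

/-- Normalised so that its derivative is `t ^ (ρ - 1)` for every `ρ`, the Nash case included. -/
noncomputable def cesTerm (ρ t : ℝ) : ℝ :=
  if ρ = 0 then log t else t ^ ρ / ρ

lemma hasDerivAt_cesTerm (ρ : ℝ) {t : ℝ} (ht : 0 < t) :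
    HasDerivAt (cesTerm ρ) (t ^ (ρ - 1)) t := by
  unfold cesTerm
  split_ifs with hρ
  · simpa [hρ, rpow_neg_one] using hasDerivAt_log ht.ne'
  · simpa [hρ] using (hasDerivAt_rpow_const (p := ρ) (Or.inl ht.ne')).div_const ρ

lemma concaveOn_cesTerm {ρ : ℝ} (hρ : ρ < 1) : ConcaveOn ℝ (Ioi 0) (cesTerm ρ) := by
  have hderiv : ∀ t ∈ Ioi (0 : ℝ), HasDerivAt (cesTerm ρ) (t ^ (ρ - 1)) t :=
    fun t ht => hasDerivAt_cesTerm ρ ht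
  refine AntitoneOn.concaveOn_of_deriv (convex_Ioi 0)
    (fun t ht => (hderiv t ht).continuousAt.continuousWithinAt)
    (fun t ht => (hderiv t (interior_subset ht)).differentiableAt.differentiableWithinAt) ?_
  rw [interior_Ioi]
  intro a ha b _ hab
  rw [(hderiv a ha).deriv, (hderiv b (lt_of_lt_of_le ha hab)).deriv]
  exact rpow_le_rpow_of_nonpos ha hab (by linarith)

lemma ces_of_pos {ρ : ℝ} (hρ : 0 < ρ) {n : ℕ} (v : Fin n → ℝ) :
    ces ρ v = (∑ i, v i ^ ρ) ^ (1 / ρ) := by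
  simp [ces, hρ.ne', hρ.not_gt]

lemma ces_eq_zero_of_nonpos {ρ : ℝ} (hρ : ρ ≤ 0) {n : ℕ} {v : Fin n → ℝ} {k : Fin n}
    (hk : v k = 0) : ces ρ v = 0 := by
  rcases hρ.eq_or_lt with rfl | hneg
  · simp [ces, Finset.prod_eq_zero (Finset.mem_univ k) hk]
  · exact (if_neg hneg.ne).trans (if_pos ⟨hneg, k, hk⟩)

lemma ces_const_pos (ρ : ℝ) {n : ℕ} [Nonempty (Fin n)] {δ : ℝ} (hδ : 0 < δ) :
    0 < ces ρ fun _ : Fin n => δ := by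
  unfold ces
  split_ifs with h0 h1
  · positivity
  · exact absurd h1.2 (by simp [hδ.ne'])
  · positivity

lemma ces_lt_ces {ρ : ℝ} {n : ℕ} {v v' : Fin n → ℝ} (hv : ∀ i, 0 < v i) (hv' : ∀ i, 0 < v' i)
    (h : ∑ i, cesTerm ρ (v i) < ∑ i, cesTerm ρ (v' i)) : ces ρ v < ces ρ v' := by
  rcases lt_trichotomy ρ 0 with hρ | rfl | hρ
  · have hne : (Finset.univ : Finset (Fin n)).Nonempty := by
      by_contra h'
      simp [Finset.not_nonempty_iff_eq_empty.1 h'] at h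
    have hzero : ∀ v : Fin n → ℝ, (∀ i, 0 < v i) → ¬ (ρ < 0 ∧ ∃ i, v i = 0) :=
      fun v hv ⟨_, i, hi⟩ => (hv i).ne' hi
    simp only [cesTerm, if_neg hρ.ne, ← Finset.sum_div, div_lt_div_right_of_neg hρ] at h
    rw [ces, ces, if_neg hρ.ne, if_neg hρ.ne, if_neg (hzero v hv), if_neg (hzero v' hv')]
    exact rpow_lt_rpow_of_neg (Finset.sum_pos (fun i _ => rpow_pos_of_pos (hv' i) ρ) hne) h
      (one_div_neg.2 hρ)
  · simp only [cesTerm, if_pos, ← log_prod fun i _ => (hv i).ne',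
      ← log_prod fun i _ => (hv' i).ne'] at h
    simpa [ces] using (log_lt_log_iff (Finset.prod_pos fun i _ => hv i)
      (Finset.prod_pos fun i _ => hv' i)).1 h
  · simp only [cesTerm, if_neg hρ.ne', ← Finset.sum_div, div_lt_div_iff_of_pos_right hρ] at h
    rw [ces_of_pos hρ, ces_of_pos hρ]
    exact rpow_lt_rpow (Finset.sum_nonneg fun i _ => (rpow_pos_of_pos (hv i) ρ).le) h
      (one_div_pos.2 hρ)

lemma hasDerivAt_sum_cesTerm_line {ι : Type*} [Fintype ι] (ρ : ℝ) {u : ι → ℝ}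
    (hu : ∀ i, 0 < u i) (d : ι → ℝ) :
    HasDerivAt (fun t : ℝ => ∑ i, cesTerm ρ ((u + t • d) i)) ((fun i => u i ^ (ρ - 1)) ⬝ᵥ d) 0 := by
  simp only [dotProduct, Pi.add_apply, Pi.smul_apply, smul_eq_mul]
  refine HasDerivAt.fun_sum fun i _ => ?_
  simpa [Function.comp_def] using (hasDerivAt_cesTerm ρ (hu i)).comp_of_eq 0
    (((hasDerivAt_id (0 : ℝ)).mul_const (d i)).const_add (u i)) (by simp)

section Allocation

variable {n m : ℕ} {R : Fin n → Finset (Fin m)}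

noncomputable def loadMatrix (R : Fin n → Finset (Fin m)) : Matrix (Fin m) (Fin n) ℝ :=
  Matrix.of fun j i => w R i j

noncomputable def leontiefAlloc (R : Fin n → Finset (Fin m)) (v : Fin n → ℝ) : Fin n → Fin m → ℝ :=
  fun i j => w R i j * v i

lemma sum_leontiefAlloc (v : Fin n → ℝ) (j : Fin m) :
    ∑ i, leontiefAlloc R v i j = (loadMatrix R *ᵥ v) j := by
  simp [leontiefAlloc, loadMatrix, mulVec, dotProduct]

lemma util_leontiefAlloc (hR : ∀ i, (R i).Nonempty) (v : Fin n → ℝ) :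
    util R (leontiefAlloc R v) = v := by
  funext i
  show bundleUtil (R i) _ = v i
  obtain ⟨j, hj⟩ := hR i
  refine le_antisymm ?_ (le_bundleUtil (hR i) fun j' hj' => by simp [leontiefAlloc, w, hj'])
  simpa [leontiefAlloc, w, hj] using bundleUtil_le (leontiefAlloc R v i) hj

lemma validAlloc_leontiefAlloc {s : Fin m → ℝ} {v : Fin n → ℝ} (hv : 0 ≤ v)
    (hload : loadMatrix R *ᵥ v ≤ s) : validAlloc s (leontiefAlloc R v) :=
  ⟨fun i j => mul_nonneg (by unfold w; split_ifs <;> norm_num) (hv i),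
    fun j => (sum_leontiefAlloc v j).trans_le (hload j)⟩

lemma leontiefAlloc_util_le {x : Fin n → Fin m → ℝ} (hx : ∀ i j, 0 ≤ x i j) (i : Fin n)
    (j : Fin m) : leontiefAlloc R (util R x) i j ≤ x i j := by
  unfold leontiefAlloc w util
  split_ifs with hj
  · simpa using bundleUtil_le (x i) hj
  · simpa using hx i j

lemma loadMatrix_mulVec_util_le {s : Fin m → ℝ} {x : Fin n → Fin m → ℝ} (hx : validAlloc s x) :
    loadMatrix R *ᵥ util R x ≤ s := fun j => by
  rw [← sum_leontiefAlloc]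
  exact (Finset.sum_le_sum fun i _ => leontiefAlloc_util_le hx.1 i j).trans (hx.2 j)

lemma eq_leontiefAlloc_of_load_eq {s : Fin m → ℝ} {x : Fin n → Fin m → ℝ} (hx : validAlloc s x)
    {j : Fin m} (hj : (loadMatrix R *ᵥ util R x) j = s j) (i : Fin n) :
    x i j = leontiefAlloc R (util R x) i j := by
  have hsum : ∑ i, leontiefAlloc R (util R x) i j = ∑ i, x i j :=
    le_antisymm (Finset.sum_le_sum fun i _ => leontiefAlloc_util_le hx.1 i j)
      (by rw [sum_leontiefAlloc, hj]; exact hx.2 j)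
  exact ((Finset.sum_eq_sum_iff_of_le fun i _ => leontiefAlloc_util_le hx.1 i j).1 hsum i
    (Finset.mem_univ i)).symm

lemma maxCES.ces_le {ρ : ℝ} {s : Fin m → ℝ} {x : Fin n → Fin m → ℝ} (hx : maxCES ρ s R x)
    (hR : ∀ i, (R i).Nonempty) {v : Fin n → ℝ} (hv : 0 ≤ v) (hload : loadMatrix R *ᵥ v ≤ s) :
    ces ρ v ≤ ces ρ (util R x) := by
  simpa [util_leontiefAlloc hR] using hx.2 _ (validAlloc_leontiefAlloc hv hload)

end Allocation

lemma exists_pos_loadMatrix_mulVec_const_le {n m : ℕ} (R : Fin n → Finset (Fin m))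
    {s : Fin m → ℝ} (hs : ∀ j, 0 < s j) : ∃ δ : ℝ, 0 < δ ∧ loadMatrix R *ᵥ (fun _ => δ) ≤ s := by
  have : ∀ᶠ δ in 𝓝 (0 : ℝ), ∀ j, (loadMatrix R *ᵥ fun _ => δ) j < s j :=
    eventually_all.2 fun j => ((by fun_prop : Continuous fun δ : ℝ =>
      (loadMatrix R *ᵥ fun _ => δ) j).tendsto' 0 0 (by simp [mulVec, dotProduct])).eventually
        (gt_mem_nhds (hs j))
  obtain ⟨δ, hδ, hδ0⟩ := ((this.filter_mono nhdsWithin_le_nhds).and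
    (self_mem_nhdsWithin : Ioi (0 : ℝ) ∈ 𝓝[>] 0)).exists
  exact ⟨δ, hδ0, fun j => (hδ j).le⟩

lemma util_pos_of_maxCES {n m : ℕ} {R : Fin n → Finset (Fin m)} (hR : ∀ i, (R i).Nonempty)
    {s : Fin m → ℝ} (hs : ∀ j, 0 < s j) {ρ : ℝ} (hρ : ρ < 1) {x : Fin n → Fin m → ℝ}
    (hx : maxCES ρ s R x) (k : Fin n) : 0 < util R x k := by
  set u := util R x
  have hu0 : 0 ≤ u := fun i => le_bundleUtil (hR i) fun j _ => hx.1.1 i j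
  obtain ⟨δ, hδ, hδload⟩ := exists_pos_loadMatrix_mulVec_const_le R hs
  by_contra! hk
  replace hk : u k = 0 := le_antisymm hk (hu0 k)
  rcases le_or_gt ρ 0 with hρ0 | hρ0
  · have : Nonempty (Fin n) := ⟨k⟩
    linarith [hx.ces_le hR (fun _ => hδ.le) hδload, ces_eq_zero_of_nonpos hρ0 hk,
      ces_const_pos ρ hδ (n := n)]
  · obtain ⟨t, ht, hlt⟩ := exists_sum_rpow_lt_sum_rpow_mix hρ0 hρ hu0 hk hδ
    have hv : (fun i => (1 - t) * u i + t * δ) = (1 - t) • u + t • fun _ => δ := by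
      ext i; simp
    have hvload : loadMatrix R *ᵥ (fun i => (1 - t) * u i + t * δ) ≤ s := by
      rw [hv, mulVec_add, mulVec_smul, mulVec_smul]
      intro j
      have := loadMatrix_mulVec_util_le (R := R) hx.1 j
      have := hδload j
      simp only [Pi.add_apply, Pi.smul_apply, smul_eq_mul]
      nlinarith [ht.1, ht.2]
    have hle := hx.ces_le hR (fun i => add_nonneg (mul_nonneg (sub_nonneg.2 ht.2.le) (hu0 i))
      (mul_nonneg ht.1.le hδ.le)) hvload
    rw [ces_of_pos hρ0, ces_of_pos hρ0] at hle
    exact hle.not_gt (rpow_lt_rpow (Finset.sum_nonneg fun i _ => rpow_nonneg (hu0 i) ρ) hlt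
      (one_div_pos.2 hρ0))

theorem exists_supporting_prices {n m : ℕ} {R : Fin n → Finset (Fin m)}
    (hR : ∀ i, (R i).Nonempty) {s : Fin m → ℝ} (hs : ∀ j, 0 < s j) {ρ : ℝ} (hρ : ρ < 1)
    {x : Fin n → Fin m → ℝ} (hx : maxCES ρ s R x) :
    ∃ q : Fin m → ℝ, 0 ≤ q ∧ (∀ i, ∑ j ∈ R i, q j = util R x i ^ (ρ - 1)) ∧
      ∀ j, 0 < q j → (loadMatrix R *ᵥ util R x) j = s j := by
  rcases isEmpty_or_nonempty (Fin n) with hn | hn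
  · exact ⟨0, le_rfl, isEmptyElim, fun j hj => (lt_irrefl 0 hj).elim⟩
  have hu := util_pos_of_maxCES hR hs hρ hx
  have hg : (fun i => util R x i ^ (ρ - 1)) ≠ 0 :=
    Function.ne_iff.2 ⟨Classical.arbitrary _, (rpow_pos_of_pos (hu _) _).ne'⟩
  obtain ⟨q, hq0, hqM, hslack⟩ := exists_kkt_multipliers (F := fun v => ∑ i, cesTerm ρ (v i))
    (isOpen_set_pi finite_univ fun _ _ => isOpen_Ioi) (concaveOn_cesTerm hρ).sum_apply
    (fun i _ => hu i) hg (hasDerivAt_sum_cesTerm_line ρ hu) (loadMatrix R) hs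
    (loadMatrix_mulVec_util_le hx.1) fun v hv hload => not_lt.1 fun hlt =>
      (hx.ces_le hR (fun i => (hv i trivial).le) hload).not_gt
        (ces_lt_ces hu (fun i => hv i trivial) hlt)
  refine ⟨q, hq0, fun i => ?_, hslack⟩
  rw [← congrFun hqM i]
  simp [vecMul, dotProduct, loadMatrix, w]

lemma sum_mul_rpow_bundleUtil_le_cost {m : ℕ} {Ri : Finset (Fin m)} (hRi : Ri.Nonempty)
    {q : Fin m → ℝ} (hq : 0 ≤ q) {α : ℝ} (hα : 0 ≤ α) {yi : Fin m → ℝ} (hyi : ∀ j, 0 ≤ yi j) :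
    (∑ j ∈ Ri, q j) * bundleUtil Ri yi ^ α ≤ cost (fun j y => q j * y ^ α) yi := by
  have hb : 0 ≤ bundleUtil Ri yi := le_bundleUtil hRi fun j _ => hyi j
  rw [Finset.sum_mul]
  calc ∑ j ∈ Ri, q j * bundleUtil Ri yi ^ α ≤ ∑ j ∈ Ri, q j * yi j ^ α :=
        Finset.sum_le_sum fun j hj =>
          mul_le_mul_of_nonneg_left (rpow_le_rpow hb (bundleUtil_le yi hj) hα) (hq j)
    _ ≤ cost (fun j y => q j * y ^ α) yi :=
        Finset.sum_le_sum_of_subset_of_nonneg (Finset.subset_univ _) fun j _ _ =>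
          mul_nonneg (hq j) (rpow_nonneg (hyi j) α)

lemma inDemand_of_cost_le_one {m : ℕ} {Ri : Finset (Fin m)} (hRi : Ri.Nonempty)
    {q : Fin m → ℝ} (hq : 0 ≤ q) {α : ℝ} (hα : 0 < α) {xi : Fin m → ℝ} (hxi : ∀ j, 0 ≤ xi j)
    (hcost : cost (fun j y => q j * y ^ α) xi ≤ 1)
    (hprice : (∑ j ∈ Ri, q j) * bundleUtil Ri xi ^ α = 1) :
    inDemand (fun j y => q j * y ^ α) Ri xi := by
  refine ⟨hxi, hcost, fun yi hyi hyc => ?_⟩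
  have hQ : 0 < ∑ j ∈ Ri, q j :=
    (Finset.sum_nonneg fun j _ => hq j).lt_of_ne (by rintro h; simp [← h] at hprice)
  have := (sum_mul_rpow_bundleUtil_le_cost hRi hq hα.le hyi).trans (hyc.trans hprice.ge)
  exact (rpow_le_rpow_iff (le_bundleUtil hRi fun j _ => hyi j)
    (le_bundleUtil hRi fun j _ => hxi j) hα).1 (le_of_mul_le_mul_left this hQ)

lemma cost_leontiefAlloc {n m : ℕ} (R : Fin n → Finset (Fin m)) (q : Fin m → ℝ) {α : ℝ}
    (hα : α ≠ 0) (v : Fin n → ℝ) (i : Fin n) :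
    cost (fun j y => q j * y ^ α) (leontiefAlloc R v i) = (∑ j ∈ R i, q j) * v i ^ α := by
  simp [cost, leontiefAlloc, w, ite_mul, zero_rpow hα, Finset.sum_mul]

/-- for every `ρ < 1` and every maximum-CES-welfare allocation `x`, there
exist nonnegative constants `q_j` such that `(x, g)` with `g_j(y) = q_j · y^(1-ρ)` is a
price curve equilibrium. -/
theorem ces_price_curves {n m : ℕ} (s : Fin m → ℝ) (hs : ∀ j, 0 < s j)
    (R : Fin n → Finset (Fin m)) (hR : ∀ i, (R i).Nonempty)
    (ρ : ℝ) (hρ : ρ < 1)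
    (x : Fin n → Fin m → ℝ) (hx : maxCES ρ s R x) :
    ∃ q : Fin m → ℝ, (∀ j, 0 ≤ q j) ∧
      isPCE s R x (fun j y => q j * y ^ (1 - ρ)) := by
  obtain ⟨q, hq0, hqR, htight⟩ := exists_supporting_prices hR hs hρ hx
  have hu := util_pos_of_maxCES hR hs hρ hx
  have hprice : ∀ i, (∑ j ∈ R i, q j) * util R x i ^ (1 - ρ) = 1 := fun i => by
    rw [hqR, ← rpow_add (hu i)]
    simp
  have hcost : ∀ i, cost (fun j y => q j * y ^ (1 - ρ)) (x i) = 1 := fun i => by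
    refine Eq.trans ?_ (hprice i)
    rw [← cost_leontiefAlloc R q (by linarith)]
    refine Finset.sum_congr rfl fun j _ => ?_
    rcases (hq0 j).eq_or_lt with hj | hj
    · simp [← hj]
    · rw [eq_leontiefAlloc_of_load_eq hx.1 (htight j hj) i]
  refine ⟨q, hq0, fun i => inDemand_of_cost_le_one (hR i) hq0 (by linarith) (hx.1.1 i)
    (hcost i).le (hprice i), hx.1.2, fun j hj => ?_⟩
  have hqj : 0 < q j := (hq0 j).lt_of_ne fun h => hj fun y _ => by simp [← h]
  rw [← htight j hqj, ← sum_leontiefAlloc]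
  exact Finset.sum_congr rfl fun i _ => eq_leontiefAlloc_of_load_eq hx.1 (htight j hqj) i

end BandwidthAlloc
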